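/- Suppose f_k are holomorphic functions on a polydisc Δ_R ⊂ ℂ^{2n} in variables (z,w), uniformly bounded by C_R, and f_k(z, conj(z)) → f(z, conj(z)) pointwise for a holomorphic function f on Δ_R. Then f_k → f uniformly on compact subsets of Δ_R. -/

import Mathlib

/-!
Put `h_k = f_k - g`: it is bounded on every smaller polydisc and tends to `0` on
`M = {(x, x̄)}`. Every point is `a + i b` with `a, b ∈ M`, and the complex line `s ↦ a + s b`
meets `M` along the real axis, so everything reduces to one variable: a bounded sequence of
holomorphic functions on a disc tending to `0` on a real segment ending at the centre has Taylor
coefficients at the centre tending to `0` (iterate `dslope`; the passage from the segment to the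
centre is uniform in `k` by Schwarz's lemma), hence tends to `0` on the whole disc by Cauchy's
estimates and dominated convergence. The lines `s ↦ a + s b` give `h_k → 0` near the origin, and
the lines through the origin then give it on the whole polydisc. Finally, uniformly bounded
holomorphic functions are equicontinuous (Schwarz's lemma on complex lines), and for an
equicontinuous family pointwise convergence is uniform on compact sets (Arzelà–Ascoli).
-/

open Filter Function Metric Set Topology

section OneVariable

variable {F : Type*} [NormedAddCommGroup F] [NormedSpace ℂ F] {f : ℂ → F} {c z : ℂ} {r B : ℝ}

theorem norm_dslope_le_two_mul_div (hf : DifferentiableOn ℂ f (ball c r))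
    (hB : ∀ w ∈ ball c r, ‖f w‖ ≤ B) (hz : z ∈ ball c r) : ‖dslope f c z‖ ≤ 2 * B / r := by
  refine Complex.norm_dslope_le_div_of_mapsTo_ball hf (fun w hw => ?_) hz
  rw [mem_closedBall, dist_eq_norm]
  calc ‖f w - f c‖ ≤ ‖f w‖ + ‖f c‖ := norm_sub_le _ _
    _ ≤ 2 * B := by linarith [hB w hw, hB c (mem_ball_self (pos_of_mem_ball hz))]

theorem iterate_dslope_self_eq_coeff {p : FormalMultilinearSeries ℂ ℂ F}
    (hp : HasFPowerSeriesAt f p c) (m : ℕ) : (swap dslope c)^[m] f c = p.coeff m := by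
  rw [← (hp.has_fpower_series_iterate_dslope_fslope m).coeff_zero 1,
    ← FormalMultilinearSeries.coeff, FormalMultilinearSeries.coeff_iterate_fslope, zero_add]

theorem norm_coeff_cauchyPowerSeries_le {ρ : ℝ} (hρ : 0 < ρ) (hB : ∀ w ∈ sphere c ρ, ‖f w‖ ≤ B)
    (m : ℕ) : ‖(cauchyPowerSeries f c ρ).coeff m‖ ≤ B / ρ ^ m := by
  have h := cauchyPowerSeries_apply f c ρ m 1
  rw [FormalMultilinearSeries.apply_eq_pow_smul_coeff, one_pow, one_smul] at h
  rw [h]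
  calc _ ≤ ρ * ((ρ ^ m)⁻¹ * ρ⁻¹ * B) := by
        refine circleIntegral.norm_two_pi_i_inv_smul_integral_le_of_norm_le_const hρ.le
          fun w hw => ?_
        rw [mem_sphere_iff_norm] at hw
        have hBw := hB w (mem_sphere_iff_norm.2 hw)
        simp only [norm_smul, norm_pow, norm_inv, hw, one_div, inv_pow, mul_assoc]
        gcongr
    _ = B / ρ ^ m := by field_simp

variable [CompleteSpace F]

theorem DifferentiableOn.iterate_dslope (hf : DifferentiableOn ℂ f (ball c r)) (m : ℕ) :
    DifferentiableOn ℂ ((swap dslope c)^[m] f) (ball c r) := by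
  induction m with
  | zero => exact hf
  | succ m ih =>
    rw [iterate_succ_apply']
    rcases lt_or_ge 0 r with hr | hr
    · exact (Complex.differentiableOn_dslope (ball_mem_nhds c hr)).2 ih
    · rw [ball_eq_empty.2 hr]
      exact differentiableOn_empty

theorem norm_iterate_dslope_le (hf : DifferentiableOn ℂ f (ball c r))
    (hB : ∀ w ∈ ball c r, ‖f w‖ ≤ B) (m : ℕ) (hz : z ∈ ball c r) :
    ‖(swap dslope c)^[m] f z‖ ≤ (2 / r) ^ m * B := by
  induction m generalizing z with
  | zero => simpa using hB z hz
  | succ m ih =>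
    rw [iterate_succ_apply']
    calc ‖dslope ((swap dslope c)^[m] f) c z‖ ≤ 2 * ((2 / r) ^ m * B) / r :=
          norm_dslope_le_two_mul_div (hf.iterate_dslope m) (fun w hw => ih hw) hz
      _ = (2 / r) ^ (m + 1) * B := by ring

theorem norm_iterate_dslope_self_le (hf : DifferentiableOn ℂ f (ball c r))
    (hB : ∀ w ∈ ball c r, ‖f w‖ ≤ B) {ρ : ℝ} (hρ : 0 < ρ) (hρr : ρ < r) (m : ℕ) :
    ‖(swap dslope c)^[m] f c‖ ≤ B / ρ ^ m := by
  lift ρ to NNReal using hρ.le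
  have hp := (hf.mono (closedBall_subset_ball hρr)).hasFPowerSeriesOnBall hρ
  rw [iterate_dslope_self_eq_coeff hp.hasFPowerSeriesAt]
  exact norm_coeff_cauchyPowerSeries_le hρ (fun w hw => hB w (sphere_subset_ball hρr hw)) m

theorem hasSum_pow_smul_iterate_dslope (hf : DifferentiableOn ℂ f (ball c r))
    (hz : z ∈ ball c r) :
    HasSum (fun m => (z - c) ^ m • (swap dslope c)^[m] f c) (f z) := by
  obtain ⟨ρ, hzρ, hρr⟩ := exists_between (mem_ball_iff_norm.1 hz)
  have hρ : 0 < ρ := (norm_nonneg _).trans_lt hzρ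
  lift ρ to NNReal using hρ.le
  have hp := (hf.mono (closedBall_subset_ball hρr)).hasFPowerSeriesOnBall hρ
  have hz' : z - c ∈ Metric.eball 0 ρ := by
    rw [Metric.eball_coe]
    simpa only [mem_ball_iff_norm, sub_zero] using hzρ
  simpa [iterate_dslope_self_eq_coeff hp.hasFPowerSeriesAt] using hp.hasSum hz'

variable {u : ℕ → ℂ → F}

theorem tendsto_zero_of_tendsto_iterate_dslope_self
    (hd : ∀ k, DifferentiableOn ℂ (u k) (ball c r)) (hb : ∀ k, ∀ w ∈ ball c r, ‖u k w‖ ≤ B)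
    (hcoeff : ∀ m, Tendsto (fun k => (swap dslope c)^[m] (u k) c) atTop (𝓝 0))
    (hz : z ∈ ball c r) : Tendsto (fun k => u k z) atTop (𝓝 0) := by
  obtain ⟨ρ, hzρ, hρr⟩ := exists_between (mem_ball_iff_norm.1 hz)
  have hρ : 0 < ρ := (norm_nonneg _).trans_lt hzρ
  simp_rw [← fun k => (hasSum_pow_smul_iterate_dslope (hd k) hz).tsum_eq]
  have hbound : ∀ k m, ‖(z - c) ^ m • (swap dslope c)^[m] (u k) c‖ ≤ B * (‖z - c‖ / ρ) ^ m := by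
    intro k m
    calc ‖(z - c) ^ m • (swap dslope c)^[m] (u k) c‖ ≤ ‖z - c‖ ^ m * (B / ρ ^ m) := by
          rw [norm_smul, norm_pow]
          gcongr
          exact norm_iterate_dslope_self_le (hd k) (hb k) hρ hρr m
      _ = B * (‖z - c‖ / ρ) ^ m := by rw [div_pow]; ring
  have hsum : Summable fun m => B * (‖z - c‖ / ρ) ^ m :=
    (summable_geometric_of_lt_one (by positivity) ((div_lt_one hρ).2 hzρ)).mul_left B
  have := tendsto_tsum_of_dominated_convergence hsum
    (fun m => by simpa using (hcoeff m).const_smul ((z - c) ^ m)) (Eventually.of_forall hbound)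
  rwa [tsum_zero] at this

theorem tendsto_iterate_dslope_self_of_tendsto_iterate_dslope_segment
    (hd : ∀ k, DifferentiableOn ℂ (u k) (ball c r)) (hb : ∀ k, ∀ w ∈ ball c r, ‖u k w‖ ≤ B)
    {δ : ℝ} (hδ : 0 < δ) (hδr : δ ≤ r) {m : ℕ}
    (hm : ∀ t ∈ Ioo 0 δ, Tendsto (fun k => (swap dslope c)^[m] (u k) (c + t)) atTop (𝓝 0)) :
    Tendsto (fun k => (swap dslope c)^[m] (u k) c) atTop (𝓝 0) := by
  set L := (2 / r) ^ (m + 1) * B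
  -- Moore–Osgood: as `t → 0⁺` the values at `c + t` tend to the value at `c` with rate `t * L`,
  -- uniformly in `k`.
  have hunif : TendstoUniformly (fun (t : ℝ) k => (swap dslope c)^[m] (u k) (c + t))
      (fun k => (swap dslope c)^[m] (u k) c) (𝓝[>] 0) := by
    rw [Metric.tendstoUniformly_iff]
    intro ε hε
    have hsmall : ∀ᶠ t : ℝ in 𝓝 0, t * L < ε :=
      (tendsto_id.mul_const L).eventually (gt_mem_nhds (by simpa using hε))
    filter_upwards [Ioo_mem_nhdsGT hδ, nhdsWithin_le_nhds hsmall] with t ht htL k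
    have hmem : c + t ∈ ball c r := by
      rw [mem_ball_iff_norm, add_sub_cancel_left, Complex.norm_real, Real.norm_of_nonneg ht.1.le]
      exact ht.2.trans_le hδr
    have hslope := sub_smul_dslope ((swap dslope c)^[m] (u k)) c (c + t)
    rw [add_sub_cancel_left] at hslope
    rw [dist_eq_norm, ← norm_neg, neg_sub, ← hslope, norm_smul, Complex.norm_real,
      Real.norm_of_nonneg ht.1.le]
    calc t * ‖dslope ((swap dslope c)^[m] (u k)) c (c + t)‖ ≤ t * L := by
          refine mul_le_mul_of_nonneg_left ?_ ht.1.le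
          simpa only [iterate_succ_apply'] using norm_iterate_dslope_le (hd k) (hb k) (m + 1) hmem
      _ < ε := htL
  exact hunif.tendsto_of_eventually_tendsto
    (by filter_upwards [Ioo_mem_nhdsGT hδ] using hm) tendsto_const_nhds

theorem tendsto_iterate_dslope_self_of_tendsto_segment
    (hd : ∀ k, DifferentiableOn ℂ (u k) (ball c r)) (hb : ∀ k, ∀ w ∈ ball c r, ‖u k w‖ ≤ B)
    {δ : ℝ} (hδ : 0 < δ) (hδr : δ ≤ r)
    (hseg : ∀ t ∈ Ioo 0 δ, Tendsto (fun k => u k (c + t)) atTop (𝓝 0)) (m : ℕ) :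
    Tendsto (fun k => (swap dslope c)^[m] (u k) c) atTop (𝓝 0) := by
  suffices hm : ∀ t ∈ Ioo 0 δ, Tendsto (fun k => (swap dslope c)^[m] (u k) (c + t)) atTop (𝓝 0) from
    tendsto_iterate_dslope_self_of_tendsto_iterate_dslope_segment hd hb hδ hδr hm
  induction m with
  | zero => exact hseg
  | succ m ih =>
    intro t ht
    have hne : c + t ≠ c := by simpa using ht.1.ne'
    have hslope : ∀ k, (swap dslope c)^[m + 1] (u k) (c + t) =
        (t : ℂ)⁻¹ • ((swap dslope c)^[m] (u k) (c + t) - (swap dslope c)^[m] (u k) c) := by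
      intro k
      rw [iterate_succ_apply', swap, dslope_of_ne _ hne, slope_def_module, add_sub_cancel_left]
    have hcenter := tendsto_iterate_dslope_self_of_tendsto_iterate_dslope_segment hd hb hδ hδr ih
    simpa [hslope] using ((ih t ht).sub hcenter).const_smul (t : ℂ)⁻¹

theorem tendsto_zero_of_tendsto_segment (hd : ∀ k, DifferentiableOn ℂ (u k) (ball c r))
    (hb : ∀ k, ∀ w ∈ ball c r, ‖u k w‖ ≤ B) {δ : ℝ} (hδ : 0 < δ) (hδr : δ ≤ r)
    (hseg : ∀ t ∈ Ioo 0 δ, Tendsto (fun k => u k (c + t)) atTop (𝓝 0)) (hz : z ∈ ball c r) :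
    Tendsto (fun k => u k z) atTop (𝓝 0) :=
  tendsto_zero_of_tendsto_iterate_dslope_self hd hb
    (tendsto_iterate_dslope_self_of_tendsto_segment hd hb hδ hδr hseg) hz

end OneVariable

section ComplexLines

variable {E F : Type*} [NormedAddCommGroup E] [NormedSpace ℂ E] [NormedAddCommGroup F]
  [NormedSpace ℂ F] {U : Set E} {B : ℝ}

theorem tendsto_zero_on_line [CompleteSpace F] {h : ℕ → E → F}
    (hd : ∀ k, DifferentiableOn ℂ (h k) U) (hb : ∀ k, ∀ x ∈ U, ‖h k x‖ ≤ B) {a v : E} {ρ δ : ℝ}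
    (hmaps : MapsTo (fun s : ℂ => a + s • v) (ball 0 ρ) U) (hδ : 0 < δ) (hδρ : δ ≤ ρ)
    (hseg : ∀ t ∈ Ioo 0 δ, Tendsto (fun k => h k (a + (t : ℂ) • v)) atTop (𝓝 0))
    {s : ℂ} (hs : s ∈ ball 0 ρ) : Tendsto (fun k => h k (a + s • v)) atTop (𝓝 0) := by
  have hline : Differentiable ℂ fun s : ℂ => a + s • v :=
    (differentiable_const a).add (differentiable_id.smul_const v)
  exact tendsto_zero_of_tendsto_segment (u := fun k s => h k (a + s • v))
    (fun k => (hd k).comp hline.differentiableOn hmaps) (fun k s hs => hb k _ (hmaps hs))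
    hδ hδρ (by simpa using hseg) hs

theorem norm_sub_le_of_ball_subset {h : E → F} (hd : DifferentiableOn ℂ h U)
    (hb : ∀ x ∈ U, ‖h x‖ ≤ B) {y : E} {d : ℝ} (hyd : ball y d ⊆ U) {x : E} (hx : x ∈ ball y d) :
    ‖h x - h y‖ ≤ 2 * B / d * ‖x - y‖ := by
  rcases eq_or_ne x y with rfl | hxy
  · simp
  have hxy' : 0 < ‖x - y‖ := norm_pos_iff.2 (sub_ne_zero.2 hxy)
  have hline : Differentiable ℂ fun s : ℂ => y + s • (x - y) :=
    (differentiable_const y).add (differentiable_id.smul_const _)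
  have hmaps : MapsTo (fun s : ℂ => y + s • (x - y)) (ball 0 (d / ‖x - y‖)) U := by
    intro s hs
    apply hyd
    rw [mem_ball_zero_iff, lt_div_iff₀ hxy'] at hs
    rwa [mem_ball_iff_norm, add_sub_cancel_left, norm_smul]
  have h1 : (1 : ℂ) ∈ ball 0 (d / ‖x - y‖) := by
    rw [mem_ball_zero_iff, norm_one, one_lt_div hxy']
    exact mem_ball_iff_norm.1 hx
  have := norm_dslope_le_two_mul_div (hd.comp hline.differentiableOn hmaps)
    (fun s hs => hb _ (hmaps hs)) h1
  rw [dslope_of_ne _ one_ne_zero, slope_def_module] at this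
  simp only [comp_apply, one_smul, add_sub_cancel, zero_smul, add_zero, sub_zero, inv_one]
    at this
  calc ‖h x - h y‖ ≤ 2 * B / (d / ‖x - y‖) := this
    _ = 2 * B / d * ‖x - y‖ := by field_simp

theorem equicontinuousAt_of_differentiableOn_of_norm_le {ι : Type*} {f : ι → E → F}
    (hU : IsOpen U) (hd : ∀ i, DifferentiableOn ℂ (f i) U) (hb : ∀ i, ∀ x ∈ U, ‖f i x‖ ≤ B)
    {y : E} (hy : y ∈ U) : EquicontinuousAt f y := by
  obtain ⟨d, hd0, hyd⟩ := Metric.isOpen_iff.1 hU y hy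
  refine Metric.equicontinuousAt_of_continuity_modulus (fun x => 2 * B / d * ‖x - y‖) ?_ f ?_
  · have : Continuous fun x : E => 2 * B / d * ‖x - y‖ := by fun_prop
    simpa using this.tendsto y
  · filter_upwards [ball_mem_nhds y hd0] with x hx i
    rw [dist_comm, dist_eq_norm]
    exact norm_sub_le_of_ball_subset (hd i) (hb i) hyd hx

end ComplexLines

theorem EquicontinuousOn.tendstoUniformlyOn_of_tendsto {ι X α : Type*} [TopologicalSpace X]
    [UniformSpace α] {F : ι → X → α} {f : X → α} {p : Filter ι} {K : Set X} (hK : IsCompact K)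
    (hF : EquicontinuousOn F K) (h : ∀ x ∈ K, Tendsto (fun i => F i x) p (𝓝 (f x))) :
    TendstoUniformlyOn F f p K := by
  have := (EquicontinuousOn.tendsto_uniformOnFun_iff_pi' (𝔖 := {K}) (by simpa using hK)
    (by simpa using hF) p f).2 ?_
  · rw [UniformOnFun.tendsto_iff_tendstoUniformlyOn] at this
    exact this K rfl
  · rw [tendsto_pi_nhds]
    rintro ⟨x, hx⟩
    exact h x (by simpa using hx)

section ConjGraph

open Complex

variable {ι : Type*}

/-- The totally real subspace `M = {(x, x̄)}` of `ℂⁿ × ℂⁿ` is the range of `conjGraph`. -/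
def conjGraph (x : ι → ℂ) : (ι → ℂ) × (ι → ℂ) := (x, star x)

theorem conjGraph_add_real_smul (x y : ι → ℂ) (t : ℝ) :
    conjGraph (x + (t : ℂ) • y) = conjGraph x + (t : ℂ) • conjGraph y := by
  ext i <;> simp [conjGraph]

variable [Fintype ι]

theorem norm_conjGraph (x : ι → ℂ) : ‖conjGraph x‖ = ‖x‖ := by
  simp [conjGraph, Prod.norm_def, norm_star]

theorem exists_eq_conjGraph_add_I_smul (p : (ι → ℂ) × (ι → ℂ)) :
    ∃ x y : ι → ℂ, p = conjGraph x + I • conjGraph y ∧ ‖x‖ ≤ ‖p‖ ∧ ‖y‖ ≤ ‖p‖ := by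
  refine ⟨(2 : ℂ)⁻¹ • (p.1 + star p.2), (2 * I)⁻¹ • (p.1 - star p.2), ?_, ?_, ?_⟩
  · ext i <;> simp [conjGraph] <;> field_simp <;> simp only [I_sq] <;> ring
  · calc ‖(2 : ℂ)⁻¹ • (p.1 + star p.2)‖ ≤ 2⁻¹ * (‖p.1‖ + ‖p.2‖) := by
          rw [norm_smul, norm_inv, Complex.norm_two, ← norm_star p.2]
          gcongr
          exact norm_add_le _ _
      _ ≤ ‖p‖ := by linarith [norm_fst_le p, norm_snd_le p]
  · calc ‖(2 * I)⁻¹ • (p.1 - star p.2)‖ ≤ 2⁻¹ * (‖p.1‖ + ‖p.2‖) := by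
          rw [norm_smul, norm_inv, norm_mul, Complex.norm_two, norm_I, mul_one, ← norm_star p.2]
          gcongr
          exact norm_sub_le _ _
      _ ≤ ‖p‖ := by linarith [norm_fst_le p, norm_snd_le p]

variable {h : ℕ → (ι → ℂ) × (ι → ℂ) → ℂ} {r B : ℝ}

theorem tendsto_zero_of_tendsto_zero_on_conjGraph_of_norm_lt_div_three
    (hd : ∀ k, DifferentiableOn ℂ (h k) (ball 0 r)) (hb : ∀ k, ∀ p ∈ ball 0 r, ‖h k p‖ ≤ B)
    (hM : ∀ x, conjGraph x ∈ ball 0 r → Tendsto (fun k => h k (conjGraph x)) atTop (𝓝 0))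
    {p : (ι → ℂ) × (ι → ℂ)} (hp : ‖p‖ < r / 3) : Tendsto (fun k => h k p) atTop (𝓝 0) := by
  obtain ⟨x, y, rfl, hx, hy⟩ := exists_eq_conjGraph_add_I_smul p
  have hmaps : MapsTo (fun s : ℂ => conjGraph x + s • conjGraph y) (ball 0 2) (ball 0 r) := by
    intro s hs
    rw [mem_ball_zero_iff] at hs ⊢
    calc ‖conjGraph x + s • conjGraph y‖ ≤ ‖x‖ + ‖s‖ * ‖y‖ := by
          simpa only [norm_smul, norm_conjGraph] using norm_add_le (conjGraph x) (s • conjGraph y)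
      _ ≤ ‖conjGraph x + I • conjGraph y‖ + 2 * ‖conjGraph x + I • conjGraph y‖ := by gcongr
      _ < r := by linarith
  refine tendsto_zero_on_line hd hb hmaps one_pos one_le_two (fun t ht => ?_) (by simp)
  have hmem : conjGraph x + (t : ℂ) • conjGraph y ∈ ball 0 r := hmaps (by
    rw [mem_ball_zero_iff, Complex.norm_real, Real.norm_of_nonneg ht.1.le]
    linarith [ht.2])
  rw [← conjGraph_add_real_smul] at hmem ⊢
  exact hM _ hmem

theorem tendsto_zero_of_tendsto_zero_on_conjGraph
    (hd : ∀ k, DifferentiableOn ℂ (h k) (ball 0 r)) (hb : ∀ k, ∀ p ∈ ball 0 r, ‖h k p‖ ≤ B)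
    (hM : ∀ x, conjGraph x ∈ ball 0 r → Tendsto (fun k => h k (conjGraph x)) atTop (𝓝 0))
    {p : (ι → ℂ) × (ι → ℂ)} (hp : p ∈ ball 0 r) : Tendsto (fun k => h k p) atTop (𝓝 0) := by
  have hr : 0 < r := pos_of_mem_ball hp
  rw [mem_ball_zero_iff] at hp
  set ρ := 2 * r / (r + ‖p‖)
  have hρ : 1 < ρ := by rw [lt_div_iff₀ (by positivity)]; linarith
  have hρp : ρ * ‖p‖ < r := by
    rw [div_mul_eq_mul_div, div_lt_iff₀ (by positivity)]
    nlinarith [norm_nonneg p]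
  have hmaps : MapsTo (fun s : ℂ => 0 + s • p) (ball 0 ρ) (ball 0 r) := fun s hs => by
    simp only [mem_ball_zero_iff, zero_add, norm_smul]
    exact (mul_le_mul_of_nonneg_right (mem_ball_zero_iff.1 hs).le (norm_nonneg p)).trans_lt hρp
  simpa using tendsto_zero_on_line hd hb hmaps (δ := 1 / 3) (by norm_num) (by linarith)
    (fun t ht => tendsto_zero_of_tendsto_zero_on_conjGraph_of_norm_lt_div_three hd hb hM (by
      rw [zero_add, norm_smul, Complex.norm_real, Real.norm_of_nonneg ht.1.le]
      nlinarith [ht.2, norm_nonneg p])) (s := 1) (by simpa using hρ)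

theorem tendsto_of_tendsto_on_conjGraph {f : ℕ → (ι → ℂ) × (ι → ℂ) → ℂ}
    {g : (ι → ℂ) × (ι → ℂ) → ℂ} {R C : ℝ} (hf : ∀ k, DifferentiableOn ℂ (f k) (ball 0 R))
    (hbound : ∀ k, ∀ p ∈ ball 0 R, ‖f k p‖ ≤ C) (hg : DifferentiableOn ℂ g (ball 0 R))
    (hconv : ∀ x, conjGraph x ∈ ball 0 R →
      Tendsto (fun k => f k (conjGraph x)) atTop (𝓝 (g (conjGraph x))))
    {p : (ι → ℂ) × (ι → ℂ)} (hp : p ∈ ball 0 R) : Tendsto (fun k => f k p) atTop (𝓝 (g p)) := by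
  obtain ⟨r, hpr, hrR⟩ := exists_between (mem_ball_zero_iff.1 hp)
  have hsub : ball 0 r ⊆ ball (0 : (ι → ℂ) × (ι → ℂ)) R := ball_subset_ball hrR.le
  obtain ⟨Cg, hCg⟩ := (isCompact_closedBall (0 : (ι → ℂ) × (ι → ℂ)) r).exists_bound_of_continuousOn
    (hg.continuousOn.mono (closedBall_subset_ball hrR))
  rw [← tendsto_sub_nhds_zero_iff]
  refine tendsto_zero_of_tendsto_zero_on_conjGraph (h := fun k q => f k q - g q) (B := C + Cg)
    (fun k => ((hf k).sub hg).mono hsub) (fun k q hq => ?_)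
    (fun x hx => tendsto_sub_nhds_zero_iff.2 (hconv x (hsub hx))) (mem_ball_zero_iff.2 hpr)
  exact (norm_sub_le _ _).trans
    (add_le_add (hbound k q (hsub hq)) (hCg q (ball_subset_closedBall hq)))

theorem setOf_forall_norm_lt_eq_ball {R : ℝ} (hR : 0 < R) :
    {p : (ι → ℂ) × (ι → ℂ) | (∀ i, ‖p.1 i‖ < R) ∧ ∀ i, ‖p.2 i‖ < R} = ball 0 R := by
  ext p
  simp [Prod.norm_def, pi_norm_lt_iff hR]

end ConjGraph

theorem stmt_14 (n : ℕ) (R : ℝ) (hR : 0 < R) (C : ℝ)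
    (f : ℕ → ((Fin n → ℂ) × (Fin n → ℂ)) → ℂ)
    (g : ((Fin n → ℂ) × (Fin n → ℂ)) → ℂ)
    (Δ : Set ((Fin n → ℂ) × (Fin n → ℂ)))
    (hΔ : Δ = {p | (∀ i, ‖p.1 i‖ < R) ∧ ∀ i, ‖p.2 i‖ < R})
    (hf : ∀ k, DifferentiableOn ℂ (f k) Δ)
    (hbound : ∀ k, ∀ p ∈ Δ, ‖f k p‖ ≤ C)
    (hg : DifferentiableOn ℂ g Δ)
    (hconv : ∀ z : Fin n → ℂ, (z, fun i => (starRingEnd ℂ) (z i)) ∈ Δ →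
      Tendsto (fun k => f k (z, fun i => (starRingEnd ℂ) (z i))) atTop
        (nhds (g (z, fun i => (starRingEnd ℂ) (z i))))) :
    ∀ K ⊆ Δ, IsCompact K → TendstoUniformlyOn (fun k => f k) g atTop K := by
  obtain rfl : Δ = ball 0 R := hΔ.trans (setOf_forall_norm_lt_eq_ball hR)
  intro K hK hKc
  refine EquicontinuousOn.tendstoUniformlyOn_of_tendsto hKc
    (fun y hy => (equicontinuousAt_of_differentiableOn_of_norm_le isOpen_ball hf hbound
      (hK hy)).equicontinuousWithinAt K)
    (fun p hp => tendsto_of_tendsto_on_conjGraph hf hbound hg hconv (hK hp))
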